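/- Suppose each F_i : ℝ^p → ℝ is Lipschitz continuous with constant L_i. Let x* minimize (1/N)∑_{i=1}^N F_i(x), and let (x_rel*, x^{1,*},…,x^{N,*}) be optimal for the relaxed problem minimizing (1/N)∑_i F_i(x^i) subject to ‖x − x^i‖ ≤ ε. Then (1/N)∑_{i=1}^N (F_i(x_rel*) − F_i(x*)) ≤ (ε/N)·L, where L = ∑_{i=1}^N L_i. -/
import Mathlib


open scoped BigOperators

/-- suboptimality bound `(1/N) ∑ (Fᵢ(xrel) - Fᵢ(x*)) ≤ (ε/N) L`. -/
theorem relaxed_suboptimality {p N : ℕ} (hN : 0 < N)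
    (F : Fin N → EuclideanSpace ℝ (Fin p) → ℝ)
    (hF : ∀ i, ConvexOn ℝ Set.univ (F i))
    (L : Fin N → ℝ) (hL : ∀ i, 0 ≤ L i)
    (hLip : ∀ i, LipschitzWith (Real.toNNReal (L i)) (F i))
    (ε : ℝ) (hε : 0 < ε)
    (xstar xrel : EuclideanSpace ℝ (Fin p))
    (xi : Fin N → EuclideanSpace ℝ (Fin p))
    (hfeas : ∀ i, ‖xrel - xi i‖ ≤ ε)
    (hrelopt : ∀ (y : EuclideanSpace ℝ (Fin p)) (yi : Fin N → EuclideanSpace ℝ (Fin p)),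
      (∀ i, ‖y - yi i‖ ≤ ε) →
      (1 / (N : ℝ)) * ∑ i, F i (xi i) ≤ (1 / (N : ℝ)) * ∑ i, F i (yi i))
    (hxopt : ∀ y : EuclideanSpace ℝ (Fin p),
      (1 / (N : ℝ)) * ∑ i, F i xstar ≤ (1 / (N : ℝ)) * ∑ i, F i y) :
    (1 / (N : ℝ)) * ∑ i, (F i xrel - F i xstar) ≤ (ε / (N : ℝ)) * ∑ i, L i := by
  have hNpos : (0:ℝ) < N := Nat.cast_pos.mpr hN
  have hlip : ∀ i, F i xrel - F i (xi i) ≤ L i * ε := by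
    intro i
    have h := (hLip i).dist_le_mul xrel (xi i)
    have hd : dist xrel (xi i) ≤ ε := by
      rw [dist_eq_norm]; exact hfeas i
    have h1 : F i xrel - F i (xi i) ≤ dist (F i xrel) (F i (xi i)) := by
      rw [Real.dist_eq]; exact le_abs_self _
    have h2 : (Real.toNNReal (L i) : ℝ) = L i := Real.coe_toNNReal _ (hL i)
    calc F i xrel - F i (xi i) ≤ (Real.toNNReal (L i) : ℝ) * dist xrel (xi i) :=
          h1.trans h
      _ ≤ (Real.toNNReal (L i) : ℝ) * ε :=
          mul_le_mul_of_nonneg_left hd (by positivity)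
      _ = L i * ε := by rw [h2]
  have hrel : ∑ i, F i (xi i) ≤ ∑ i, F i xstar := by
    have := hrelopt xstar (fun _ => xstar) (fun i => by simp [hε.le])
    have h := mul_le_mul_of_nonneg_left this hNpos.le
    rw [← mul_assoc, ← mul_assoc, mul_one_div_cancel hNpos.ne', one_mul, one_mul] at h
    exact h
  have key : ∑ i, (F i xrel - F i xstar) ≤ ε * ∑ i, L i := by
    calc ∑ i, (F i xrel - F i xstar)
        = (∑ i, F i xrel) - ∑ i, F i xstar := by rw [Finset.sum_sub_distrib]
      _ ≤ (∑ i, F i xrel) - ∑ i, F i (xi i) := by linarith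
      _ = ∑ i, (F i xrel - F i (xi i)) := by rw [Finset.sum_sub_distrib]
      _ ≤ ∑ i, L i * ε := Finset.sum_le_sum (fun i _ => hlip i)
      _ = ε * ∑ i, L i := by rw [← Finset.sum_mul, mul_comm]
  rw [div_eq_mul_one_div ε (N:ℝ), mul_comm ε, mul_assoc]
  exact mul_le_mul_of_nonneg_left key (by positivity)
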